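/- arXiv:1211.5700 — 2 statements merged into one kernel-verified Lean document; each statement's English description precedes it below -/
import Mathlib

section
/- Let f ∈ F_Φ, let V ⊂ 𝕏 be open with cl(V) ⊂ dom(f) and V ≠ 𝕏, and for α ≥ 0 set V_α := {x ∈ V : d(x,∂V) ≥ α}. Then lim_{α→0⁺} Φ(f;V_α) = Φ(f;V); more precisely, Φ(f;V_α) ≤ Φ(f;V) for all α > 0, and for every ε > 0 there exists τ > 0 such that Φ(f;V) ≤ Φ(f;V_α) + 2ε for all 0 < α ≤ τ. -/
open scoped ENNReal
open Metric Set

variable {𝕏 Z : Type*}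

/-- The pointwise functional `Φ(f;x,y)` is encoded by a function of `x`, `y`, `f x`, `f y`
only (so that it depends only on these data), with values in `[0,∞]`. -/
noncomputable def phiOn (Φ : 𝕏 → Z → 𝕏 → Z → ℝ≥0∞) (f : 𝕏 → Z) (D : Set 𝕏) : ℝ≥0∞ :=
  ⨆ x ∈ D, ⨆ y ∈ D, ⨆ (_ : x ≠ y), Φ x (f x) y (f y)

/-- (P0): symmetry of `Φ` (nonnegativity is automatic in `ℝ≥0∞`). -/
def PhiSymm (Φ : 𝕏 → Z → 𝕏 → Z → ℝ≥0∞) : Prop := ∀ x a y b, Φ x a y b = Φ y b x a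

/-- (P2): every `f` with `Φ(f;dom f) < ∞` admits a minimal extension to any larger domain. -/
def PhiMinExt (Φ : 𝕏 → Z → 𝕏 → Z → ℝ≥0∞) : Prop :=
  ∀ (f : 𝕏 → Z) (E D : Set 𝕏), E ⊆ D → phiOn Φ f E ≠ ⊤ →
    ∃ F : 𝕏 → Z, (∀ x ∈ E, F x = f x) ∧ phiOn Φ F D = phiOn Φ f E

variable [MetricSpace 𝕏] [MetricSpace Z]

/-- The open ball `B_{1/2}(x,y)` of radius `d(x,y)/2` centered at the midpoint `m x y`. -/
def halfBall (m : 𝕏 → 𝕏 → 𝕏) (x y : 𝕏) : Set 𝕏 := Metric.ball (m x y) (dist x y / 2)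

/-- Membership in the family `Γ(x,y)` of continuous monotone curves in `cl(B_{1/2}(x,y))`
from `x` to `y`. -/
def IsGammaCurve (m : 𝕏 → 𝕏 → 𝕏) (x y : 𝕏) (γ : ℝ → 𝕏) : Prop :=
  γ 0 = x ∧ γ 1 = y ∧ ContinuousOn γ (Set.Icc 0 1) ∧
    (∀ t ∈ Set.Icc (0:ℝ) 1, γ t ∈ closure (halfBall m x y)) ∧
    ∀ t₁ ∈ Set.Icc (0:ℝ) 1, ∀ t₂ ∈ Set.Icc (0:ℝ) 1, t₁ < t₂ →
      dist (γ 0) (γ t₁) < dist (γ 0) (γ t₂)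

/-- (P3): the Chasles inequality. -/
def PhiChasles (Φ : 𝕏 → Z → 𝕏 → Z → ℝ≥0∞) (m : 𝕏 → 𝕏 → 𝕏) : Prop :=
  ∀ (f : 𝕏 → Z) (E : Set 𝕏), phiOn Φ f E ≠ ⊤ → ∀ x ∈ E, ∀ y ∈ E, x ≠ y →
    closure (halfBall m x y) ⊆ E →
    ∃ γ : ℝ → 𝕏, IsGammaCurve m x y γ ∧ ∀ t ∈ Set.Icc (0:ℝ) 1,
      Φ x (f x) y (f y) ≤ max (Φ x (f x) (γ t) (f (γ t))) (Φ (γ t) (f (γ t)) y (f y))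

/-- (P4): continuity of `Φ`, where `η` depends only on `ε` and on `d(x,y)`. -/
def PhiCont (Φ : 𝕏 → Z → 𝕏 → Z → ℝ≥0∞) : Prop :=
  ∀ ε : ℝ≥0∞, 0 < ε → ∀ r : ℝ, 0 < r → ∃ η : ℝ, 0 < η ∧
    ∀ (f : 𝕏 → Z) (E : Set 𝕏), phiOn Φ f E ≠ ⊤ →
      ∀ x ∈ E, ∀ y ∈ E, x ≠ y → dist x y = r → ∀ z ∈ Metric.ball y η ∩ E,
        Φ x (f x) y (f y) < Φ x (f x) z (f z) + ε ∧
        Φ x (f x) z (f z) < Φ x (f x) y (f y) + ε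

/-- (P5): every `f` with `Φ(f;dom f) < ∞` is continuous on its domain. -/
def PhiFunCont (Φ : 𝕏 → Z → 𝕏 → Z → ℝ≥0∞) : Prop :=
  ∀ (f : 𝕏 → Z) (E : Set 𝕏), phiOn Φ f E ≠ ⊤ → ContinuousOn f E

/-- The family `𝒪(ρ,N₀)` of unions of at most `N₀` open balls, each of radius at least `ρ`. -/
def OFam (ρ : ℝ) (N₀ : ℕ) : Set (Set 𝕏) :=
  { Ω | ∃ (N : ℕ) (c : Fin N → 𝕏) (r : Fin N → ℝ),
      N ≤ N₀ ∧ (∀ i, ρ ≤ r i) ∧ Ω = ⋃ i, Metric.ball (c i) (r i) }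

/-- `Ψ(f;V;α) = sup { Φ(f;x,y) : x ≠ y, B(x;d(x,y)) ⊆ V, d(x,∂V) ≥ α }`. -/
noncomputable def psiOn (Φ : 𝕏 → Z → 𝕏 → Z → ℝ≥0∞) (f : 𝕏 → Z) (V : Set 𝕏) (α : ℝ) :
    ℝ≥0∞ :=
  ⨆ x, ⨆ y,
    ⨆ (_ : x ≠ y ∧ Metric.ball x (dist x y) ⊆ V ∧ α ≤ Metric.infDist x (frontier V)),
      Φ x (f x) y (f y)


omit [MetricSpace 𝕏] [MetricSpace Z] in
lemma phiOn_mono' (Φ : 𝕏 → Z → 𝕏 → Z → ℝ≥0∞) (f : 𝕏 → Z)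
    {D₁ D₂ : Set 𝕏} (h : D₁ ⊆ D₂) : phiOn Φ f D₁ ≤ phiOn Φ f D₂ := by
  simp only [phiOn]
  refine iSup₂_le fun x hx => iSup₂_le fun y hy => iSup_le fun hxy => ?_
  exact le_iSup₂_of_le x (h hx) (le_iSup₂_of_le y (h hy) (le_iSup_of_le hxy le_rfl))

lemma frontier_nonempty_mid [CompleteSpace 𝕏] (m : 𝕏 → 𝕏 → 𝕏)
    (hml : ∀ x y : 𝕏, dist x (m x y) = dist x y / 2)
    (hmr : ∀ x y : 𝕏, dist (m x y) y = dist x y / 2)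
    {V : Set 𝕏} (hne : V.Nonempty) (hnu : V ≠ Set.univ) : (frontier V).Nonempty := by
  classical
  obtain ⟨x, hx⟩ := hne
  obtain ⟨y, hy⟩ : ∃ y, y ∉ V := by
    by_contra h; push_neg at h; exact hnu (eq_univ_of_forall h)
  set p : ℕ → 𝕏 × 𝕏 := fun n => Nat.rec (x, y)
    (fun _ q => if m q.1 q.2 ∈ V then (m q.1 q.2, q.2) else (q.1, m q.1 q.2)) n with hp
  have hstep : ∀ n, p (n+1) = if m (p n).1 (p n).2 ∈ V
      then (m (p n).1 (p n).2, (p n).2) else ((p n).1, m (p n).1 (p n).2) := fun n => rfl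
  have hinv : ∀ n, (p n).1 ∈ V ∧ (p n).2 ∉ V ∧
      dist (p n).1 (p n).2 = dist x y / 2 ^ n := by
    intro n; induction n with
    | zero => exact ⟨hx, hy, by show dist x y = dist x y / 2 ^ 0; simp⟩
    | succ n ih =>
      rw [hstep]
      by_cases hc : m (p n).1 (p n).2 ∈ V
      · simp only [if_pos hc]
        refine ⟨hc, ih.2.1, ?_⟩
        rw [hmr, ih.2.2]; ring
      · simp only [if_neg hc]
        refine ⟨ih.1, hc, ?_⟩
        rw [hml, ih.2.2]; ring
  have hd : ∀ n, dist (p n).1 (p (n+1)).1 ≤ dist x y * (1/2) ^ n := by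
    intro n
    have h2 : (0:ℝ) ≤ dist x y / 2 ^ n := by positivity
    rw [hstep]
    by_cases hc : m (p n).1 (p n).2 ∈ V
    · simp only [if_pos hc]
      rw [hml, (hinv n).2.2, one_div, inv_pow, ← div_eq_mul_inv]
      linarith
    · simp only [if_neg hc, dist_self]
      positivity
  have hcauchy : CauchySeq (fun n => (p n).1) :=
    cauchySeq_of_le_geometric (1/2) (dist x y) (by norm_num) hd
  obtain ⟨z, hz⟩ := cauchySeq_tendsto_of_complete hcauchy
  have hz2 : Filter.Tendsto (fun n => (p n).2) Filter.atTop (nhds z) := by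
    rw [tendsto_iff_dist_tendsto_zero]
    have hb : ∀ n, dist (p n).2 z ≤ dist x y / 2 ^ n + dist (p n).1 z := by
      intro n
      calc dist (p n).2 z ≤ dist (p n).2 (p n).1 + dist (p n).1 z := dist_triangle _ _ _
        _ = dist x y / 2 ^ n + dist (p n).1 z := by rw [dist_comm, (hinv n).2.2]
    refine squeeze_zero (fun n => dist_nonneg) hb ?_
    have h1 : Filter.Tendsto (fun n : ℕ => dist x y / 2 ^ n) Filter.atTop (nhds 0) := by
      simp only [div_eq_mul_inv, ← inv_pow]
      simpa using (tendsto_pow_atTop_nhds_zero_of_lt_one (by norm_num : (0:ℝ) ≤ 2⁻¹)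
        (by norm_num)).const_mul (dist x y)
    have h2 : Filter.Tendsto (fun n => dist (p n).1 z) Filter.atTop (nhds 0) :=
      tendsto_iff_dist_tendsto_zero.1 hz
    simpa using h1.add h2
  refine ⟨z, ?_⟩
  rw [frontier_eq_closure_inter_closure]
  constructor
  · exact mem_closure_of_tendsto hz (Filter.Eventually.of_forall fun n => (hinv n).1)
  · exact mem_closure_of_tendsto hz2 (Filter.Eventually.of_forall fun n => (hinv n).2.1)

/-- `Φ(f;V_α) → Φ(f;V)` as `α → 0⁺`: monotone bound and an `ε`-`τ` approximation. -/
theorem phi_of_Valpha_tendsto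
    [CompleteSpace 𝕏] [ProperSpace 𝕏] [CompleteSpace Z]
    (m : 𝕏 → 𝕏 → 𝕏)
    (hm_left : ∀ x y : 𝕏, dist x (m x y) = dist x y / 2)
    (hm_right : ∀ x y : 𝕏, dist (m x y) y = dist x y / 2)
    (hm_conv : ∀ x y z : 𝕏, dist (m x y) z ≤ (dist x z + dist y z) / 2)
    (Φ : 𝕏 → Z → 𝕏 → Z → ℝ≥0∞)
    (hP0 : PhiSymm Φ) (hP4 : PhiCont Φ)
    (f : 𝕏 → Z) (E : Set 𝕏) (hf : phiOn Φ f E ≠ ⊤)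
    (V : Set 𝕏) (hVopen : IsOpen V) (hVdom : closure V ⊆ E) (hVuniv : V ≠ Set.univ) :
    (∀ α : ℝ, 0 < α →
      phiOn Φ f {x ∈ V | α ≤ Metric.infDist x (frontier V)} ≤ phiOn Φ f V) ∧
    ∀ ε : ℝ≥0∞, 0 < ε → ∃ τ : ℝ, 0 < τ ∧ ∀ α : ℝ, 0 < α → α ≤ τ →
      phiOn Φ f V ≤
        phiOn Φ f {x ∈ V | α ≤ Metric.infDist x (frontier V)} + 2 * ε := by
  classical
  set Vα : ℝ → Set 𝕏 := fun α => {x ∈ V | α ≤ Metric.infDist x (frontier V)} with hVα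
  refine ⟨fun α _ => phiOn_mono' Φ f fun x hx => hx.1, ?_⟩
  intro ε hε
  by_cases hεtop : ε = ⊤
  · refine ⟨1, one_pos, fun α _ _ => ?_⟩
    simp [hεtop]
  by_cases hVemp : V = ∅
  · refine ⟨1, one_pos, fun α _ _ => ?_⟩
    have h0 : phiOn Φ f V = 0 := by simp [phiOn, hVemp]
    rw [h0]; exact zero_le
  have hfr : (frontier V).Nonempty :=
    frontier_nonempty_mid m hm_left hm_right (nonempty_iff_ne_empty.2 hVemp) hVuniv
  have hpos : ∀ x ∈ V, 0 < Metric.infDist x (frontier V) := by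
    intro x hx
    rw [← isClosed_frontier.notMem_iff_infDist_pos hfr]
    intro h
    rw [hVopen.frontier_eq] at h
    exact h.2 hx
  have hbne : phiOn Φ f V ≠ ⊤ := fun h =>
    hf (top_le_iff.1 (h ▸ phiOn_mono' Φ f (subset_closure.trans hVdom)))
  have hsup : phiOn Φ f V ≤ ⨆ n : ℕ, phiOn Φ f (Vα (1 / ((n : ℝ) + 1))) := by
    refine iSup₂_le fun x hx => iSup₂_le fun y hy => iSup_le fun hxy => ?_
    obtain ⟨nx, hnx⟩ := exists_nat_one_div_lt (hpos x hx)
    obtain ⟨ny, hny⟩ := exists_nat_one_div_lt (hpos y hy)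
    have hxmem : x ∈ Vα (1 / ((max nx ny : ℕ) + 1 : ℝ)) := by
      refine ⟨hx, le_trans (le_trans ?_ hnx.le) le_rfl⟩
      apply one_div_le_one_div_of_le (by positivity)
      have h := (Nat.cast_le (α := ℝ)).2 (le_max_left nx ny)
      linarith
    have hymem : y ∈ Vα (1 / ((max nx ny : ℕ) + 1 : ℝ)) := by
      refine ⟨hy, le_trans (le_trans ?_ hny.le) le_rfl⟩
      apply one_div_le_one_div_of_le (by positivity)
      have h := (Nat.cast_le (α := ℝ)).2 (le_max_right nx ny)
      linarith
    refine le_trans ?_ (le_iSup _ (max nx ny))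
    exact le_iSup₂_of_le x hxmem (le_iSup₂_of_le y hymem (le_iSup_of_le hxy le_rfl))
  by_cases hle : phiOn Φ f V ≤ ε
  · refine ⟨1, one_pos, fun α _ _ => ?_⟩
    refine le_trans hle (le_trans ?_ le_add_self)
    rw [two_mul]; exact le_self_add
  push_neg at hle
  have hlt : phiOn Φ f V - ε < ⨆ n : ℕ, phiOn Φ f (Vα (1 / ((n : ℝ) + 1))) :=
    lt_of_lt_of_le (ENNReal.sub_lt_self hbne (pos_of_gt hle).ne' hε.ne') hsup
  obtain ⟨n, hn⟩ := lt_iSup_iff.1 hlt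
  have hkey : phiOn Φ f V ≤ phiOn Φ f (Vα (1 / ((n : ℝ) + 1))) + ε :=
    le_of_lt ((ENNReal.sub_lt_iff_lt_right hεtop hle.le).1 hn)
  refine ⟨1 / ((n : ℝ) + 1), by positivity, fun α hα hατ => ?_⟩
  have hsub : Vα (1 / ((n : ℝ) + 1)) ⊆ Vα α := fun x hx => ⟨hx.1, le_trans hατ hx.2⟩
  calc phiOn Φ f V ≤ phiOn Φ f (Vα (1 / ((n : ℝ) + 1))) + ε := hkey
    _ ≤ phiOn Φ f (Vα α) + 2 * ε := by
        refine add_le_add (phiOn_mono' Φ f hsub) ?_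
        rw [two_mul]; exact le_self_add
end

section
/- Fix ρ > 0 and β > 0 with β < ρ. Let {B(x_n;r_n)}_{n∈ℕ} be a sequence of open balls contained in X with r_n > ρ for all n ∈ ℕ, and set A_N := ∪_{n≤N} B(x_n;r_n) for N ∈ ℕ and A_∞ := ∪_{n∈ℕ} B(x_n;r_n). Then for every ε > 0 there exists N_ε ∈ ℕ such that every open ball B(x;r) with r ≥ β and B(x;r) ⊂ A_∞ satisfies B(x;r−ε) ⊂ A_{N_ε}. -/
open Metric Set Filter Topology

/-- Geometrical Lemma: if a ball of radius at least `β` is contained in the countable union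
`A_∞` of the balls `B(cₙ;rₙ)`, then after shrinking its radius by `ε` it is contained in a
finite subunion `A_{N_ε}`, where `N_ε` is independent of the ball. -/
theorem geometrical_lemma
    {𝕏 : Type*} [MetricSpace 𝕏] [CompleteSpace 𝕏] [ProperSpace 𝕏]
    (m : 𝕏 → 𝕏 → 𝕏)
    (hm_left : ∀ x y : 𝕏, dist x (m x y) = dist x y / 2)
    (hm_right : ∀ x y : 𝕏, dist (m x y) y = dist x y / 2)
    (hm_conv : ∀ x y z : 𝕏, dist (m x y) z ≤ (dist x z + dist y z) / 2)
    (X : Set 𝕏) (hX : IsCompact X)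
    (ρ β : ℝ) (hρ : 0 < ρ) (hβ : 0 < β) (hβρ : β < ρ)
    (c : ℕ → 𝕏) (r : ℕ → ℝ)
    (hsub : ∀ n : ℕ, Metric.ball (c n) (r n) ⊆ X)
    (hr : ∀ n : ℕ, ρ < r n) :
    ∀ ε : ℝ, 0 < ε → ∃ Nε : ℕ, ∀ (x : 𝕏) (s : ℝ), β ≤ s →
      Metric.ball x s ⊆ (⋃ n : ℕ, Metric.ball (c n) (r n)) →
      Metric.ball x (s - ε) ⊆ ⋃ n ≤ Nε, Metric.ball (c n) (r n) := by
  intro ε hε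
  -- it suffices to prove the statement for ε' := min ε (β/2), which satisfies ε' < β
  set ε' : ℝ := min ε (β / 2) with hε'def
  have hε'pos : 0 < ε' := lt_min hε (by linarith)
  have hε'β : ε' < β := lt_of_le_of_lt (min_le_right _ _) (by linarith)
  have hε'ε : ε' ≤ ε := min_le_left _ _
  suffices h : ∃ Nε : ℕ, ∀ (x : 𝕏) (s : ℝ), β ≤ s →
      Metric.ball x s ⊆ (⋃ n : ℕ, Metric.ball (c n) (r n)) →
      Metric.ball x (s - ε') ⊆ ⋃ n ≤ Nε, Metric.ball (c n) (r n) by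
    obtain ⟨N, hN⟩ := h
    exact ⟨N, fun x s hβs hsU =>
      (ball_subset_ball (by linarith)).trans (hN x s hβs hsU)⟩
  -- the union is contained in X
  have hUX : (⋃ n : ℕ, Metric.ball (c n) (r n)) ⊆ X := iUnion_subset hsub
  -- X is bounded; take C ≥ 0 bounding distances in X
  obtain ⟨C0, hC0⟩ := Metric.isBounded_iff.mp hX.isBounded
  set C : ℝ := max C0 0 with hCdef
  have hC : ∀ ⦃u : 𝕏⦄, u ∈ X → ∀ ⦃v : 𝕏⦄, v ∈ X → dist u v ≤ C :=
    fun u hu v hv => (hC0 hu hv).trans (le_max_left _ _)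
  have hC0' : (0:ℝ) ≤ C := le_max_right _ _
  by_contra hcon
  push_neg at hcon
  choose x s hβs hsU hnot using hcon
  have h2 : ∀ N : ℕ, ∃ y, y ∈ Metric.ball (x N) (s N - ε') ∧
      y ∉ ⋃ n, ⋃ (_ : n ≤ N), Metric.ball (c n) (r n) :=
    fun N => Set.not_subset.mp (hnot N)
  choose y hy hyn using h2
  -- truncated radii
  set s' : ℕ → ℝ := fun N => min (s N) (C + β + 1) with hs'def
  have hβs' : ∀ N, β ≤ s' N := fun N => le_min (hβs N) (by linarith)
  have hs'le : ∀ N, s' N ≤ C + β + 1 := fun N => min_le_right _ _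
  have hballU : ∀ N, Metric.ball (x N) (s' N) ⊆ ⋃ n : ℕ, Metric.ball (c n) (r n) :=
    fun N => (ball_subset_ball (min_le_left _ _)).trans (hsU N)
  have hxX : ∀ N, x N ∈ X := fun N =>
    hUX (hsU N (mem_ball_self (by linarith [hβs N])))
  have hyX : ∀ N, y N ∈ X := fun N =>
    hUX (hsU N (ball_subset_ball (by linarith [hε'pos]) (hy N)))
  have hy' : ∀ N, dist (y N) (x N) < s' N - ε' := by
    intro N
    have h1 : dist (y N) (x N) < s N - ε' := mem_ball.mp (hy N)
    have h2 : dist (y N) (x N) ≤ C := hC (hyX N) (hxX N)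
    have : min (s N) (C + β + 1) - ε' = min (s N - ε') (C + β + 1 - ε') := by
      rw [min_sub_sub_right]
    rw [hs'def]; simp only []
    rw [this]
    exact lt_min h1 (by linarith)
  -- compactness: extract a convergent subsequence of the triples
  have hKcpt : IsCompact ((X ×ˢ Set.Icc β (C + β + 1)) ×ˢ X) :=
    (hX.prod isCompact_Icc).prod hX
  have hmem : ∀ N : ℕ, ((x N, s' N), y N) ∈ (X ×ˢ Set.Icc β (C + β + 1)) ×ˢ X :=
    fun N => ⟨⟨hxX N, ⟨hβs' N, hs'le N⟩⟩, hyX N⟩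
  obtain ⟨⟨⟨a, σ⟩, b⟩, hlim_mem, φ, hφ, hconv⟩ := hKcpt.tendsto_subseq hmem
  obtain ⟨⟨haX, hσ⟩, hbX⟩ := hlim_mem
  have hxa : Tendsto (fun N => x (φ N)) atTop (𝓝 a) :=
    ((continuous_fst.comp continuous_fst).tendsto _).comp hconv
  have hσt : Tendsto (fun N => s' (φ N)) atTop (𝓝 σ) :=
    ((continuous_snd.comp continuous_fst).tendsto _).comp hconv
  have hyb : Tendsto (fun N => y (φ N)) atTop (𝓝 b) :=
    (continuous_snd.tendsto _).comp hconv
  -- the limit ball is contained in the union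
  have hballa : Metric.ball a σ ⊆ ⋃ n : ℕ, Metric.ball (c n) (r n) := by
    intro z hz
    have hz' : dist z a < σ := mem_ball.mp hz
    have ht : Tendsto (fun N => s' (φ N) - dist z (x (φ N))) atTop
        (𝓝 (σ - dist z a)) := hσt.sub (tendsto_const_nhds.dist hxa)
    have hev := ht.eventually (eventually_gt_nhds (by linarith : (0:ℝ) < σ - dist z a))
    obtain ⟨N, hN⟩ := hev.exists
    exact hballU (φ N) (mem_ball.mpr (by linarith))
  -- dist a b ≤ σ - ε'
  have hab : dist a b ≤ σ - ε' := by
    refine le_of_tendsto_of_tendsto' (hxa.dist hyb) (hσt.sub tendsto_const_nhds) ?_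
    intro N
    rw [dist_comm]
    exact (hy' (φ N)).le
  have hσβ : β ≤ σ := hσ.1
  have hbU : b ∈ ⋃ n : ℕ, Metric.ball (c n) (r n) :=
    hballa (mem_ball.mpr (by rw [dist_comm]; linarith))
  obtain ⟨k, hk⟩ := mem_iUnion.mp hbU
  have hbk : dist b (c k) < r k := mem_ball.mp hk
  have hev2 : ∀ᶠ N in atTop, dist (y (φ N)) (c k) < r k :=
    (hyb.dist tendsto_const_nhds).eventually (eventually_lt_nhds hbk)
  have hev3 : ∀ᶠ N in atTop, k ≤ φ N :=
    eventually_atTop.mpr ⟨k, fun N hN => hN.trans (hφ.le_apply)⟩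
  obtain ⟨N, hN1, hN2⟩ := (hev2.and hev3).exists
  exact hyn (φ N) (Set.mem_biUnion hN2 (mem_ball.mpr hN1))
end
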